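/- Let T be a finite tree with at least 3 vertices and Aut(T) its automorphism group. Then the number of Aut(T)-orbits of internal vertices of T plus the number of Aut(T)-orbits of edges of T whose two endpoints are both internal equals 1 plus the number of Aut(T)-orbits of arcs (u, v) of T whose two endpoints are both internal. -/

import Mathlib

/-!
By Burnside's lemma it suffices to prove, for every automorphism `φ` of `T`, that the numbers of
internal vertices, of internal edges and of internal arcs fixed by `φ` satisfy `a + e = 1 + 2f`,
where `f` is the number of internal edges fixed pointwise (each gives two fixed arcs).
If `φ` fixes a vertex, it fixes an internal vertex `r`; it then fixes no edge setwise without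
fixing it pointwise, as both endpoints would be at the same distance from `r`, and the fixed
internal vertices form a subtree, so `a = f + 1` and `e = f`. Otherwise `φ` has no fixed vertex
and inverts exactly one edge, which is internal, so `a = f = 0` and `e = 1`.
-/

/-- A vertex of a simple graph is a leaf if it has exactly one neighbour. -/
def IsLeafVert {V : Type} (T : SimpleGraph V) (v : V) : Prop :=
  ∃! u, T.Adj v u

open Finset MulAction

section OrbitCounting

variable {G X : Type*} [Group G] [MulAction G X]

lemma natCard_quot_eq_natCard_orbitRel_quotient (r : X → X → Prop)
    (hr : ∀ x y, r x y ↔ ∃ g : G, g • x = y) :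
    Nat.card (Quot r) = Nat.card (orbitRel.Quotient G X) :=
  Nat.card_congr <| Quot.congrRight fun x y =>
    (hr x y).trans (mem_orbit_iff.symm.trans mem_orbit_symm)

open scoped Classical in
lemma natCard_fixedBy_subMulAction [Fintype X] (s : SubMulAction G X) (g : G) :
    Nat.card (fixedBy s g) = #{x | x ∈ s ∧ g • x = x} := by
  rw [← Fintype.card_subtype, ← Nat.card_eq_fintype_card]
  exact Nat.card_congr <| (Equiv.subtypeEquivRight fun x => Subtype.ext_iff).trans
    (Equiv.subtypeSubtypeEquivSubtypeInter (· ∈ s) fun x => g • x = x)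

lemma sum_natCard_fixedBy_eq_natCard_orbitRel_quotient_mul [Fintype G] [Finite X] :
    ∑ g : G, Nat.card (fixedBy X g) = Nat.card (orbitRel.Quotient G X) * Nat.card G := by
  classical
  have := Fintype.ofFinite X
  simpa only [Nat.card_eq_fintype_card] using sum_card_fixedBy_eq_card_orbits_mul_card_group G X

lemma natCard_orbitRel_quotient_add_eq_one_add [Finite G] {Y Z : Type*} [MulAction G Y]
    [MulAction G Z] [Finite X] [Finite Y] [Finite Z]
    (h : ∀ g : G, Nat.card (fixedBy X g) + Nat.card (fixedBy Y g) = 1 + Nat.card (fixedBy Z g)) :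
    Nat.card (orbitRel.Quotient G X) + Nat.card (orbitRel.Quotient G Y) =
      1 + Nat.card (orbitRel.Quotient G Z) := by
  have := Fintype.ofFinite G
  have hsum := sum_congr rfl fun g (_ : g ∈ univ) => h g
  simp only [sum_add_distrib, sum_natCard_fixedBy_eq_natCard_orbitRel_quotient_mul, sum_const,
    card_univ, smul_eq_mul, mul_one, ← Nat.card_eq_fintype_card] at hsum
  exact Nat.eq_of_mul_eq_mul_right (Nat.card_pos (α := G)) (by linarith)

end OrbitCounting

instance Sym2.mulAction {M α : Type*} [Monoid M] [MulAction M α] : MulAction M (Sym2 α) where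
  smul g := Sym2.map (g • ·)
  one_smul e := by
    change Sym2.map _ e = e
    simp
  mul_smul g h e := by
    change Sym2.map _ e = Sym2.map _ (Sym2.map _ e)
    simp [Sym2.map_map, mul_smul]

lemma Sym2.smul_def {M α : Type*} [Monoid M] [MulAction M α] (g : M) (e : Sym2 α) :
    g • e = e.map (g • ·) := rfl

namespace SimpleGraph

section TreeGeometry

variable {V V' : Type*} {G : SimpleGraph V} {G' : SimpleGraph V'}

lemma Iso.dist_le (φ : G ≃g G') (u v : V) : G'.dist (φ u) (φ v) ≤ G.dist u v := by
  by_cases h : G.Reachable u v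
  · obtain ⟨p, hp⟩ := h.exists_walk_length_eq_dist
    simpa [hp] using G'.dist_le (p.map φ.toHom)
  · have h' : ¬ G'.Reachable (φ u) (φ v) := fun h' => h (by simpa using h'.map φ.symm.toHom)
    simp [dist_eq_zero_of_not_reachable h']

lemma Iso.dist_eq (φ : G ≃g G') (u v : V) : G'.dist (φ u) (φ v) = G.dist u v :=
  (φ.dist_le u v).antisymm (by simpa using φ.symm.dist_le (φ u) (φ v))

lemma Reachable.exists_adj_dist_add_one {r v : V} (h : G.Reachable v r) (hne : v ≠ r) :
    ∃ w, G.Adj v w ∧ G.dist r w + 1 = G.dist r v := by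
  obtain ⟨p, hp⟩ := h.exists_walk_length_eq_dist
  cases p with
  | nil => exact absurd rfl hne
  | cons hadj q =>
    refine ⟨_, hadj, ?_⟩
    rw [dist_comm, dist_comm (u := r)]
    refine le_antisymm ?_ ?_
    · simpa [← hp] using G.dist_le q
    · simpa [add_comm, dist_eq_one_iff_adj.mpr hadj] using hadj.reachable.dist_triangle_left r

lemma IsTree.eq_of_adj_of_dist_lt (hG : G.IsTree) {r v p q : V} (hp : G.Adj v p)
    (hq : G.Adj v q) (hpr : G.dist r p < G.dist r v) (hqr : G.dist r q < G.dist r v) :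
    p = q := by
  have geodesic_through : ∀ {w}, G.Adj v w → G.dist r w < G.dist r v →
      ∃ c : G.Walk v r, c.IsPath ∧ c.snd = w := by
    intro w hw hwr
    obtain ⟨c, hc⟩ := hG.connected.exists_walk_length_eq_dist w r
    have hlen : (Walk.cons hw c).length = G.dist v r := by
      rcases hG.dist_eq_dist_add_one_of_adj r hw with h | h <;>
        simp only [Walk.length_cons, hc, dist_comm (u := r)] at * <;> omega
    exact ⟨_, (Walk.cons hw c).isPath_of_length_eq_dist hlen, Walk.snd_cons ..⟩
  obtain ⟨c, hc, rfl⟩ := geodesic_through hp hpr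
  obtain ⟨c', hc', rfl⟩ := geodesic_through hq hqr
  rw [(hG.existsUnique_path v r).unique hc hc']

open scoped Classical in
noncomputable def parent (G : SimpleGraph V) (r v : V) : V :=
  if h : ∃ p, G.Adj v p ∧ G.dist r p + 1 = G.dist r v then h.choose else v

lemma parent_self (r : V) : G.parent r r = r := by
  simp [parent]

lemma Reachable.parent_spec {r v : V} (h : G.Reachable v r) (hv : v ≠ r) :
    G.Adj v (G.parent r v) ∧ G.dist r (G.parent r v) + 1 = G.dist r v := by
  have hex := h.exists_adj_dist_add_one hv
  simpa [parent, hex] using hex.choose_spec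

lemma IsTree.eq_parent (hG : G.IsTree) {r v p : V} (hp : G.Adj v p)
    (hpr : G.dist r p < G.dist r v) : p = G.parent r v := by
  have hv : v ≠ r := by rintro rfl; simp at hpr
  have := (hG.connected v r).parent_spec hv
  exact hG.eq_of_adj_of_dist_lt hp this.1 hpr (by omega)

lemma IsTree.map_parent (hG : G.IsTree) (φ : G ≃g G) (r v : V) :
    φ (G.parent r v) = G.parent (φ r) (φ v) := by
  obtain rfl | hv := eq_or_ne v r
  · simp [parent_self]
  have := (hG.connected v r).parent_spec hv
  exact hG.eq_parent (φ.map_adj_iff.mpr this.1) (by rw [φ.dist_eq, φ.dist_eq]; omega)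

open scoped Classical in
lemma IsTree.card_edgeFinset_induce_add_one [Fintype V] (hG : G.IsTree) {r : V}
    {s : Finset V} (hr : r ∈ s) (hs : ∀ v ∈ s, G.parent r v ∈ s) :
    #((⊤ : G.Subgraph).induce s).spanningCoe.edgeFinset + 1 = #s := by
  rw [← card_erase_add_one hr, Nat.add_right_cancel_iff]
  symm
  refine card_bij (fun v _ => s(v, G.parent r v)) ?_ ?_ ?_
  · intro v hv
    obtain ⟨hvr, hvs⟩ := mem_erase.mp hv
    simpa [hvs, hs v hvs] using ((hG.connected v r).parent_spec hvr).1
  · intro v hv w hw hvw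
    have hv := ((hG.connected v r).parent_spec (ne_of_mem_erase hv)).2
    have hw := ((hG.connected w r).parent_spec (ne_of_mem_erase hw)).2
    rcases Sym2.eq_iff.mp hvw with ⟨h, -⟩ | ⟨h, h'⟩
    · exact h
    · rw [h'] at hv; rw [← h] at hw; omega
  · intro e he
    induction e using Sym2.ind with | h a b => ?_
    simp only [mem_edgeFinset, mem_edgeSet, Subgraph.spanningCoe_adj, Subgraph.induce_adj,
      mem_coe, Subgraph.top_adj] at he
    obtain ⟨ha, hb, hab⟩ := he
    rcases hG.dist_eq_dist_add_one_of_adj r hab with h | h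
    · have har : a ≠ r := by rintro rfl; simp at h
      exact ⟨a, mem_erase.mpr ⟨har, ha⟩, by rw [← hG.eq_parent hab (by omega)]⟩
    · have hbr : b ≠ r := by rintro rfl; simp at h
      refine ⟨b, mem_erase.mpr ⟨hbr, hb⟩, ?_⟩
      rw [← hG.eq_parent hab.symm (by omega), Sym2.eq_swap]

lemma IsTree.apply_eq_self_of_mk_eq (hG : G.IsTree) (φ : G ≃g G) {r a b : V} (hr : φ r = r)
    (hab : G.Adj a b) (h : s(φ a, φ b) = s(a, b)) : φ a = a ∧ φ b = b := by
  rcases Sym2.eq_iff.mp h with h | ⟨ha, -⟩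
  · exact h
  · exact absurd (by rw [← φ.dist_eq, hr, ha]) (hG.dist_ne_of_adj r hab)

lemma IsTree.eq_and_eq_of_adj_of_adj (hG : G.IsTree) {a b c d : V} (hab : G.Adj a b)
    (hcd : G.Adj c d) (hac : G.dist a c < G.dist a d) (hbd : G.dist b d < G.dist b c) :
    a = c ∧ b = d := by
  have hab1 : G.dist a b = 1 := dist_eq_one_iff_adj.mpr hab
  have hba1 : G.dist b a = 1 := dist_eq_one_iff_adj.mpr hab.symm
  have := hG.dist_eq_dist_add_one_of_adj a hcd
  have := hG.dist_eq_dist_add_one_of_adj b hcd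
  have := hG.connected.dist_triangle (u := a) (v := b) (w := d)
  have := hG.connected.dist_triangle (u := b) (v := a) (w := c)
  obtain rfl | hca := eq_or_ne c a
  · refine ⟨rfl, (hG.connected.dist_eq_zero_iff).mp ?_⟩
    simp only [dist_self] at *
    omega
  obtain ⟨c', hcc', hc'⟩ := (hG.connected c a).exists_adj_dist_add_one hca
  have := hG.connected.dist_triangle (u := b) (v := a) (w := c')
  have := hG.eq_of_adj_of_dist_lt (r := b) hcc' hcd (by omega) hbd
  subst this
  omega

lemma IsTree.mk_apply_eq_of_apply_apply_eq (hG : G.IsTree) (φ : G ≃g G) {a c : V}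
    (ha : G.Adj a (φ a)) (hc : G.Adj c (φ c)) (hφc : φ (φ c) = c) :
    s(a, φ a) = s(c, φ c) := by
  have h₁ : G.dist (φ a) c = G.dist a (φ c) := by rw [← φ.dist_eq a (φ c), hφc]
  have h₂ : G.dist (φ a) (φ c) = G.dist a c := φ.dist_eq a c
  rcases hG.dist_eq_dist_add_one_of_adj a hc with h | h
  · obtain ⟨rfl, -⟩ := hG.eq_and_eq_of_adj_of_adj ha hc.symm (by omega) (by omega)
    rw [hφc, Sym2.eq_swap]
  · obtain ⟨rfl, -⟩ := hG.eq_and_eq_of_adj_of_adj ha hc (by omega) (by omega)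
    rfl

/- `hvx` says that `x` lies on a geodesic from `v` to `φ x`. When `x` has minimal displacement
`k`, so does its neighbour `y` towards `φ x`, and unless `φ` inverts an edge, `y` again lies on a
geodesic from `v` to `φ y`: `φ` translates along an axis. -/
lemma IsTree.exists_step_of_forall_le_dist (hG : G.IsTree) (φ : G ≃g G) {k : ℕ}
    (hk : ∀ x, k ≤ G.dist x (φ x)) (hswap : ∀ a, G.Adj a (φ a) → φ (φ a) ≠ a)
    {v x : V} (hx : G.dist x (φ x) = k) (hk0 : 0 < k)
    (hvx : G.dist v (φ x) = G.dist v x + k) :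
    ∃ y, G.dist y (φ y) = k ∧ G.dist v (φ y) = G.dist v y + k ∧
      G.dist v y = G.dist v x + 1 := by
  have hxφ : x ≠ φ x := fun h => by simp [← h] at hx; omega
  obtain ⟨y, hxy, hy⟩ := (hG.connected x (φ x)).exists_adj_dist_add_one hxφ
  have hφxy : G.Adj (φ x) (φ y) := φ.map_adj_iff.mpr hxy
  rw [dist_comm (u := φ x), dist_comm (u := φ x), hx] at hy
  have hxy1 : G.dist x y = 1 := dist_eq_one_iff_adj.mpr hxy
  have hφxy1 : G.dist (φ x) (φ y) = 1 := dist_eq_one_iff_adj.mpr hφxy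
  have hyk : G.dist y (φ y) = k := by
    have := hG.connected.dist_triangle (u := y) (v := φ x) (w := φ y)
    have := hk y
    omega
  have hvy : G.dist v y = G.dist v x + 1 := by
    have := hG.connected.dist_triangle (u := v) (v := x) (w := y)
    have := hG.connected.dist_triangle (u := v) (v := y) (w := φ x)
    omega
  refine ⟨y, hyk, ?_, hvy⟩
  rcases hG.dist_eq_dist_add_one_of_adj v hφxy with h | h
  swap; · omega
  exfalso
  obtain rfl | hk2 : k = 1 ∨ 2 ≤ k := by omega
  · have hyφ : y = φ x := (hG.connected.dist_eq_zero_iff).mp (by omega)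
    subst hyφ
    exact hswap x hxy (hG.eq_of_adj_of_dist_lt (r := v) hφxy hxy.symm (by omega) (by omega))
  · have hyφ : φ x ≠ y := fun h => by simp [h] at hy; omega
    obtain ⟨z, hz, hzy⟩ := (hG.connected (φ x) y).exists_adj_dist_add_one hyφ
    have := hG.connected.dist_triangle (u := v) (v := y) (w := z)
    have hzφ := hG.eq_of_adj_of_dist_lt (r := v) hz hφxy (by omega) (by omega)
    subst hzφ
    omega

theorem IsTree.exists_adj_apply_apply_eq [Finite V] (hG : G.IsTree) (φ : G ≃g G)
    (hφ : ∀ x, φ x ≠ x) : ∃ a, G.Adj a (φ a) ∧ φ (φ a) = a := by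
  by_contra! hswap
  have : Nonempty V := hG.connected.nonempty
  obtain ⟨v, hv⟩ := Finite.exists_min (fun x => G.dist x (φ x))
  have hk0 : 0 < G.dist v (φ v) := hG.connected.pos_dist_of_ne (hφ v).symm
  obtain ⟨x, ⟨hxk, hvx⟩, hmax⟩ := Set.exists_max_image
    {x | G.dist x (φ x) = G.dist v (φ v) ∧ G.dist v (φ x) = G.dist v x + G.dist v (φ v)}
    (G.dist v) (Set.toFinite _) ⟨v, rfl, by simp⟩
  obtain ⟨y, hyk, hvy, hy⟩ := hG.exists_step_of_forall_le_dist φ hv hswap hxk hk0 hvx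
  have := hmax y ⟨hyk, hvy⟩
  omega

open scoped Classical in
lemma card_filter_adj_eq_two_mul_card_edgeFinset [Fintype V] (H : SimpleGraph V) :
    #{p : V × V | H.Adj p.1 p.2} = 2 * #H.edgeFinset := by
  rw [← dart_card_eq_twice_card_edges, ← Fintype.card_subtype]
  exact Fintype.card_congr
    { toFun p := ⟨p.1, p.2⟩, invFun d := ⟨d.toProd, d.adj⟩
      left_inv _ := rfl, right_inv _ := rfl }

end TreeGeometry

section Leaves

variable {V V' : Type} {G : SimpleGraph V} {G' : SimpleGraph V'}

lemma Iso.isLeafVert_apply_iff (φ : G ≃g G') (v : V) :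
    IsLeafVert G' (φ v) ↔ IsLeafVert G v := by
  unfold IsLeafVert
  rw [← φ.toEquiv.existsUnique_congr_right]
  simp [φ.map_adj_iff]

lemma not_isLeafVert_of_adj_of_adj {v a b : V} (ha : G.Adj v a) (hb : G.Adj v b) (hab : a ≠ b) :
    ¬ IsLeafVert G v :=
  fun hv => hab (hv.unique ha hb)

lemma Connected.eq_or_eq_of_isLeafVert_of_adj (hG : G.Connected) {a b : V} (hab : G.Adj a b)
    (ha : IsLeafVert G a) (hb : IsLeafVert G b) (z : V) : z = a ∨ z = b := by
  by_contra! hz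
  obtain ⟨a', ha', hza'⟩ := (hG a z).exists_adj_dist_add_one hz.1.symm
  obtain ⟨b', hb', hzb'⟩ := (hG b z).exists_adj_dist_add_one hz.2.symm
  rw [ha.unique ha' hab] at hza'
  rw [hb.unique hb' hab.symm] at hzb'
  omega

lemma Connected.not_isLeafVert_of_adj [Fintype V] (hG : G.Connected) (hV : 3 ≤ Fintype.card V)
    {a b : V} (hab : G.Adj a b) (ha : IsLeafVert G a) : ¬ IsLeafVert G b := by
  classical
  intro hb
  have hsub : (univ : Finset V) ⊆ {a, b} := fun z _ => by
    simpa using hG.eq_or_eq_of_isLeafVert_of_adj hab ha hb z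
  have := card_le_card hsub
  have := card_le_two (a := a) (b := b)
  rw [card_univ] at *
  omega

lemma IsTree.not_isLeafVert_parent (hG : G.IsTree) {r : V} (hr : ¬ IsLeafVert G r) (v : V) :
    ¬ IsLeafVert G (G.parent r v) := by
  obtain rfl | hv := eq_or_ne v r
  · rwa [parent_self]
  obtain ⟨hvp, hvd⟩ := (hG.connected v r).parent_spec hv
  obtain hpr | hpr := eq_or_ne (G.parent r v) r
  · rwa [hpr]
  obtain ⟨hpp, hpd⟩ := (hG.connected _ r).parent_spec hpr
  exact not_isLeafVert_of_adj_of_adj hvp.symm hpp (fun h => by rw [← h] at hpd; omega)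

lemma IsTree.exists_not_isLeafVert_apply_eq [Fintype V] (hG : G.IsTree)
    (hV : 3 ≤ Fintype.card V) (φ : G ≃g G) {x : V} (hx : φ x = x) :
    ∃ r, ¬ IsLeafVert G r ∧ φ r = r := by
  by_cases hxl : IsLeafVert G x
  · obtain ⟨u, hu⟩ := hxl.exists
    refine ⟨u, hG.connected.not_isLeafVert_of_adj hV hu hxl, hxl.unique ?_ hu⟩
    simpa [hx] using φ.map_adj_iff.mpr hu
  · exact ⟨x, hxl, hx⟩

variable (G) in
def internalVerts : SubMulAction (G ≃g G) V where
  carrier := {v | ¬ IsLeafVert G v}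
  smul_mem' φ v hv := by simpa [φ.isLeafVert_apply_iff] using hv

variable (G) in
def internalEdges : SubMulAction (G ≃g G) (Sym2 V) where
  carrier := {e | e ∈ G.edgeSet ∧ ∀ v ∈ e, ¬ IsLeafVert G v}
  smul_mem' φ e he := by
    induction e using Sym2.ind with | h a b =>
    simpa [Sym2.smul_def, φ.isLeafVert_apply_iff, φ.map_adj_iff] using he

variable (G) in
def internalArcs : SubMulAction (G ≃g G) (V × V) where
  carrier := {p | G.Adj p.1 p.2 ∧ ¬ IsLeafVert G p.1 ∧ ¬ IsLeafVert G p.2}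
  smul_mem' φ p hp := by simpa [φ.isLeafVert_apply_iff, φ.map_adj_iff] using hp

@[simp] lemma mem_internalVerts {v : V} : v ∈ G.internalVerts ↔ ¬ IsLeafVert G v := Iff.rfl

@[simp] lemma mem_internalEdges {e : Sym2 V} :
    e ∈ G.internalEdges ↔ e ∈ G.edgeSet ∧ ∀ v ∈ e, ¬ IsLeafVert G v := Iff.rfl

@[simp] lemma mem_internalArcs {p : V × V} :
    p ∈ G.internalArcs ↔ G.Adj p.1 p.2 ∧ ¬ IsLeafVert G p.1 ∧ ¬ IsLeafVert G p.2 :=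
  Iff.rfl

open scoped Classical in
lemma IsTree.card_fixed_internal_of_apply_eq [Fintype V] (hG : G.IsTree) (φ : G ≃g G)
    {r : V} (hrl : ¬ IsLeafVert G r) (hr : φ r = r) :
    #{v | v ∈ G.internalVerts ∧ φ • v = v} + #{e | e ∈ G.internalEdges ∧ φ • e = e} =
      1 + #{p | p ∈ G.internalArcs ∧ φ • p = p} := by
  set s : Finset V := {v | v ∈ G.internalVerts ∧ φ • v = v}
  set H := ((⊤ : G.Subgraph).induce s).spanningCoe
  have hverts : #s = #H.edgeFinset + 1 := by
    refine (hG.card_edgeFinset_induce_add_one (r := r) (by simp [s, hrl, hr]) ?_).symm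
    intro v hv
    simp only [s, mem_filter, mem_univ, true_and, mem_internalVerts, RelIso.smul_def] at hv ⊢
    exact ⟨hG.not_isLeafVert_parent hrl v, by rw [hG.map_parent, hr, hv.2]⟩
  have hedges :
      ({e | e ∈ G.internalEdges ∧ φ • e = e} : Finset (Sym2 V)) = H.edgeFinset := by
    ext e
    induction e using Sym2.ind with | h a b => ?_
    simp only [mem_filter, mem_univ, true_and, mem_internalEdges, mem_edgeSet,
      Sym2.forall_mem_pair, Sym2.smul_def, Sym2.map_mk, RelIso.smul_def, mem_edgeFinset, H, s,
      Subgraph.spanningCoe_adj, Subgraph.induce_adj, coe_filter, Set.mem_ofPred_eq,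
      Subgraph.top_adj]
    constructor
    · rintro ⟨⟨hab, ha, hb⟩, h⟩
      obtain ⟨ha', hb'⟩ := hG.apply_eq_self_of_mk_eq φ hr hab h
      exact ⟨⟨ha, ha'⟩, ⟨hb, hb'⟩, hab⟩
    · rintro ⟨⟨ha, ha'⟩, ⟨hb, hb'⟩, hab⟩
      exact ⟨⟨hab, ha, hb⟩, by rw [ha', hb']⟩
  have harcs : #{p | p ∈ G.internalArcs ∧ φ • p = p} = #{p : V × V | H.Adj p.1 p.2} := by
    congr 1
    ext ⟨a, b⟩
    simp only [mem_filter, mem_univ, true_and, mem_internalArcs, mem_internalVerts, Prod.ext_iff,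
      Prod.smul_fst, Prod.smul_snd, RelIso.smul_def, H, s, coe_filter, Subgraph.spanningCoe_adj,
      Subgraph.induce_adj, Set.mem_ofPred_eq, Subgraph.top_adj]
    tauto
  rw [harcs, card_filter_adj_eq_two_mul_card_edgeFinset, hedges, hverts]
  ring

open scoped Classical in
lemma IsTree.card_fixed_internal_of_forall_ne [Fintype V] (hG : G.IsTree)
    (hV : 3 ≤ Fintype.card V) (φ : G ≃g G) (hφ : ∀ x, φ x ≠ x) :
    #{v | v ∈ G.internalVerts ∧ φ • v = v} + #{e | e ∈ G.internalEdges ∧ φ • e = e} =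
      1 + #{p | p ∈ G.internalArcs ∧ φ • p = p} := by
  obtain ⟨a, ha, hφa⟩ := hG.exists_adj_apply_apply_eq φ hφ
  have hal : ¬ IsLeafVert G a := fun hal =>
    hG.connected.not_isLeafVert_of_adj hV ha hal ((φ.isLeafVert_apply_iff a).mpr hal)
  have hverts : #{v | v ∈ G.internalVerts ∧ φ • v = v} = 0 := by
    simp [hφ]
  have harcs : #{p | p ∈ G.internalArcs ∧ φ • p = p} = 0 := by
    simp [Prod.ext_iff, hφ]
  have hedges : #{e | e ∈ G.internalEdges ∧ φ • e = e} = 1 := by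
    refine card_eq_one.mpr ⟨s(a, φ a), eq_singleton_iff_unique_mem.mpr ⟨?_, ?_⟩⟩
    · simp [ha, hal, hφa, Sym2.smul_def, Sym2.eq_swap, (φ.isLeafVert_apply_iff a).not.mpr hal]
    · intro e he
      induction e using Sym2.ind with | h c d => ?_
      simp only [mem_filter, mem_univ, true_and, mem_internalEdges, mem_edgeSet,
        Sym2.smul_def, Sym2.map_mk, RelIso.smul_def] at he
      rcases Sym2.eq_iff.mp he.2 with ⟨hc, -⟩ | ⟨rfl, hd⟩
      · exact absurd hc (hφ c)
      · exact hG.mk_apply_eq_of_apply_apply_eq φ he.1.1 ha hφa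
  rw [hverts, harcs, hedges]

open scoped Classical in
theorem IsTree.card_fixed_internalVerts_add_card_fixed_internalEdges [Fintype V]
    (hG : G.IsTree) (hV : 3 ≤ Fintype.card V) (φ : G ≃g G) :
    #{v | v ∈ G.internalVerts ∧ φ • v = v} + #{e | e ∈ G.internalEdges ∧ φ • e = e} =
      1 + #{p | p ∈ G.internalArcs ∧ φ • p = p} := by
  by_cases hfix : ∃ x, φ x = x
  · obtain ⟨x, hx⟩ := hfix
    obtain ⟨r, hrl, hr⟩ := hG.exists_not_isLeafVert_apply_eq hV φ hx
    exact hG.card_fixed_internal_of_apply_eq φ hrl hr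
  · exact hG.card_fixed_internal_of_forall_ne hV φ fun x hx => hfix ⟨x, hx⟩

end Leaves

end SimpleGraph

open SimpleGraph in
/-- The dissymmetry theorem for trees restricted to internal nodes: in a finite tree with
at least 3 vertices, the number of `Aut(T)`-orbits of internal vertices plus the number of
`Aut(T)`-orbits of edges with both endpoints internal equals `1` plus the number of
`Aut(T)`-orbits of arcs with both endpoints internal. -/
theorem dissymmetry_internal {V : Type} [Fintype V]
    (T : SimpleGraph V) (hT : T.IsTree) (hcard : 3 ≤ Fintype.card V) :
    Nat.card (Quot (fun (u v : {v : V // ¬ IsLeafVert T v}) =>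
        ∃ φ : T ≃g T, φ u.val = v.val)) +
      Nat.card (Quot (fun (e e' : {e : Sym2 V // e ∈ T.edgeSet ∧ ∀ v ∈ e, ¬ IsLeafVert T v}) =>
        ∃ φ : T ≃g T, Sym2.map (fun x => φ x) e.val = e'.val)) =
    1 + Nat.card (Quot
        (fun (p q : {p : V × V // T.Adj p.1 p.2 ∧ ¬ IsLeafVert T p.1 ∧ ¬ IsLeafVert T p.2}) =>
        ∃ φ : T ≃g T, φ p.val.1 = q.val.1 ∧ φ p.val.2 = q.val.2)) := by
  have : Finite (T ≃g T) := Finite.of_injective _ DFunLike.coe_injective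
  have key := natCard_orbitRel_quotient_add_eq_one_add (G := T ≃g T) (X := T.internalVerts)
    (Y := T.internalEdges) (Z := T.internalArcs) fun φ => by
      simp only [natCard_fixedBy_subMulAction]
      convert hT.card_fixed_internalVerts_add_card_fixed_internalEdges hcard φ
  convert key using 2
  · exact natCard_quot_eq_natCard_orbitRel_quotient (X := T.internalVerts) _ fun x y => by
      simp [Subtype.ext_iff]
  · exact natCard_quot_eq_natCard_orbitRel_quotient (X := T.internalEdges) _ fun x y => by
      simp [Subtype.ext_iff, Sym2.smul_def]
  · exact natCard_quot_eq_natCard_orbitRel_quotient (X := T.internalArcs) _ fun x y => by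
      simp [Subtype.ext_iff, Prod.ext_iff]
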